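/- Let Y and Z be metric spaces, each equipped with an action of a group G by isometries that is metrically properly discontinuous (i.e. for every point w of the space there exists ε > 0 such that the set {g ∈ G : dist(w, g • w) < ε} is finite). Let h : Y → Z be a G-equivariant continuous injection such that the induced map between the orbit spaces Y/G → Z/G (each endowed with the quotient topology) is a homeomorphism. Then h itself is a homeomorphism. -/

import Mathlib

/-!
Equivariance and the homeomorphism of orbit spaces make `h` bijective, and they show that the
saturation `G • h(U)` of the image of an open set `U` is open. To see that `h` is open, take
`y ∈ Y`, a small ball `B` around `y`, and a point `z'` of `G • h(B)` close to `h y`, say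
`g • z' = h c` with `c ∈ B`. Then `g` moves a point near `h y` to a point near `h y`, so by
proper discontinuity and isometry it fixes `h y`, hence `y` by injectivity; therefore
`z' = h (g⁻¹ • c)` with `g⁻¹ • c` as close to `y` as `c` is.
-/

open Metric Filter Topology

section IsometricAction

variable {G Y Z : Type*}

theorem exists_pos_forall_dist_smul_lt_imp_smul_eq [MetricSpace Z] [SMul G Z] {z : Z}
    (hdisc : ∃ ε > (0 : ℝ), {g : G | dist z (g • z) < ε}.Finite) :
    ∃ ε > (0 : ℝ), ∀ g : G, dist z (g • z) < ε → g • z = z := by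
  obtain ⟨ε₀, hε₀, hfin⟩ := hdisc
  -- The finitely many points `g • z ≠ z` with `dist z (g • z) < ε₀` stay away from `z`.
  set moved : Set Z := (· • z) '' {g : G | dist z (g • z) < ε₀ ∧ g • z ≠ z}
  have hmoved : IsClosed moved := ((hfin.subset fun _ hg => hg.1).image _).isClosed
  obtain ⟨ε₁, hε₁, hball⟩ := Metric.isOpen_iff.mp hmoved.isOpen_compl z
    (fun ⟨_, hg, hgz⟩ => hg.2 hgz)
  refine ⟨min ε₀ ε₁, lt_min hε₀ hε₁, fun g hg => ?_⟩
  by_contra hgz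
  refine hball ?_ ⟨g, ⟨hg.trans_le (min_le_left _ _), hgz⟩, rfl⟩
  rw [mem_ball, dist_comm]
  exact hg.trans_le (min_le_right _ _)

theorem exists_pos_smul_eq_of_smul_mem_ball [PseudoMetricSpace Z] [SMul G Z]
    [IsIsometricSMul G Z] {z : Z} (hfix : ∃ ε > (0 : ℝ), ∀ g : G, dist z (g • z) < ε → g • z = z) :
    ∃ ε > (0 : ℝ), ∀ (g : G) (z' : Z), z' ∈ ball z ε → g • z' ∈ ball z ε → g • z = z := by
  obtain ⟨ε, hε, hfixε⟩ := hfix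
  refine ⟨ε / 2, half_pos hε, fun g z' hz' hgz' => hfixε g ?_⟩
  calc dist z (g • z) ≤ dist (g • z') z + dist (g • z') (g • z) := dist_triangle_left _ _ _
    _ = dist (g • z') z + dist z' z := by rw [dist_smul]
    _ < ε / 2 + ε / 2 := add_lt_add hgz' hz'
    _ = ε := add_halves ε

variable [Group G] [MulAction G Y] [MulAction G Z]

theorem surjective_of_equivariant_of_surjective_mk_comp {h : Y → Z}
    (hequiv : ∀ (g : G) (y : Y), h (g • y) = g • h y)
    (hsurj : Function.Surjective (Quotient.mk (MulAction.orbitRel G Z) ∘ h)) :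
    Function.Surjective h := by
  intro z
  obtain ⟨y, hy⟩ := hsurj (Quotient.mk _ z)
  obtain ⟨g, hg : g • z = h y⟩ := Quotient.exact hy
  exact ⟨g⁻¹ • y, by rw [hequiv, ← hg, inv_smul_smul]⟩

theorem isOpenMap_of_equivariant_of_isOpenMap_mk_comp [PseudoMetricSpace Y] [MetricSpace Z]
    [IsIsometricSMul G Y] [IsIsometricSMul G Z]
    (hfix : ∀ z : Z, ∃ ε > (0 : ℝ), ∀ g : G, dist z (g • z) < ε → g • z = z)
    {h : Y → Z} (hcont : Continuous h) (hinj : Function.Injective h)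
    (hequiv : ∀ (g : G) (y : Y), h (g • y) = g • h y)
    (hopen : IsOpenMap (Quotient.mk (MulAction.orbitRel G Z) ∘ h)) :
    IsOpenMap h := by
  refine IsOpenMap.of_nhds_le fun y => le_map fun s hs => ?_
  obtain ⟨ρ, hρ, hρs⟩ := Metric.mem_nhds_iff.mp hs
  refine mem_of_superset ?_ (Set.image_mono hρs)
  obtain ⟨ε, hε, hfixε⟩ := exists_pos_smul_eq_of_smul_mem_ball (hfix (h y))
  obtain ⟨δ, hδ, hδε⟩ := Metric.mem_nhds_iff.mp (hcont.continuousAt (ball_mem_nhds (h y) hε))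
  have hr : 0 < min ρ δ := lt_min hρ hδ
  have hsat : Quotient.mk _ ⁻¹' ((Quotient.mk _ ∘ h) '' ball y (min ρ δ)) ∈ 𝓝 (h y) :=
    ((hopen _ isOpen_ball).preimage continuous_quot_mk).mem_nhds ⟨y, mem_ball_self hr, rfl⟩
  filter_upwards [hsat, ball_mem_nhds (h y) hε] with z' ⟨c, hc, hcz'⟩ hz'
  obtain ⟨g, hg : g • z' = h c⟩ := Quotient.exact hcz'
  have hgc : g • z' ∈ ball (h y) ε := hg ▸ hδε (ball_subset_ball (min_le_right _ _) hc)
  have hgy : g • y = y := hinj (by rw [hequiv]; exact hfixε g z' hz' hgc)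
  refine ⟨g⁻¹ • c, ?_, by rw [hequiv, ← hg, inv_smul_smul]⟩
  rw [mem_ball, ← dist_smul g, smul_inv_smul, hgy]
  exact hc.trans_le (min_le_left _ _)

end IsometricAction

theorem equivariant_injection_isHomeomorph_general
    {G Y Z : Type*} [Group G] [MetricSpace Y] [MetricSpace Z]
    [MulAction G Y] [MulAction G Z]
    (hisoY : ∀ g : G, Isometry (fun y : Y => g • y))
    (hisoZ : ∀ g : G, Isometry (fun z : Z => g • z))
    (hdiscZ : ∀ w : Z, ∃ ε > (0 : ℝ), {g : G | dist w (g • w) < ε}.Finite)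
    (h : Y → Z) (hcont : Continuous h) (hinj : Function.Injective h)
    (hequiv : ∀ (g : G) (y : Y), h (g • y) = g • h y)
    (H : Quotient (MulAction.orbitRel G Y) ≃ₜ Quotient (MulAction.orbitRel G Z))
    (hH : ∀ y : Y, H (Quotient.mk (MulAction.orbitRel G Y) y)
        = Quotient.mk (MulAction.orbitRel G Z) (h y)) :
    IsHomeomorph h := by
  have : IsIsometricSMul G Y := ⟨hisoY⟩
  have : IsIsometricSMul G Z := ⟨hisoZ⟩
  have hcomm : Quotient.mk _ ∘ h = H ∘ Quotient.mk (MulAction.orbitRel G Y) :=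
    funext fun y => (hH y).symm
  have hmk := MulAction.isOpenQuotientMap_quotientMk (Γ := G) (T := Y)
  refine ⟨hcont, ?_, hinj, surjective_of_equivariant_of_surjective_mk_comp hequiv ?_⟩
  · refine isOpenMap_of_equivariant_of_isOpenMap_mk_comp
      (fun z => exists_pos_forall_dist_smul_lt_imp_smul_eq (hdiscZ z)) hcont hinj hequiv ?_
    rw [hcomm]
    exact H.isOpenMap.comp hmk.isOpenMap
  · rw [hcomm]
    exact H.surjective.comp hmk.surjective

/-- Let `Y` and `Z` be metric spaces, each equipped with an action of a group
`G` by isometries that is metrically properly discontinuous. Let `h : Y → Z` be a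
`G`-equivariant continuous injection such that the induced map between the orbit spaces
`Y/G → Z/G` (with the quotient topologies) is a homeomorphism. Then `h` is a homeomorphism. -/
theorem equivariant_injection_isHomeomorph
    {G Y Z : Type*} [Group G] [MetricSpace Y] [MetricSpace Z]
    [MulAction G Y] [MulAction G Z]
    (hisoY : ∀ g : G, Isometry (fun y : Y => g • y))
    (hisoZ : ∀ g : G, Isometry (fun z : Z => g • z))
    (hdiscY : ∀ w : Y, ∃ ε > (0 : ℝ), {g : G | dist w (g • w) < ε}.Finite)
    (hdiscZ : ∀ w : Z, ∃ ε > (0 : ℝ), {g : G | dist w (g • w) < ε}.Finite)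
    (h : Y → Z) (hcont : Continuous h) (hinj : Function.Injective h)
    (hequiv : ∀ (g : G) (y : Y), h (g • y) = g • h y)
    (H : Quotient (MulAction.orbitRel G Y) ≃ₜ Quotient (MulAction.orbitRel G Z))
    (hH : ∀ y : Y, H (Quotient.mk (MulAction.orbitRel G Y) y)
        = Quotient.mk (MulAction.orbitRel G Z) (h y)) :
    IsHomeomorph h :=
  equivariant_injection_isHomeomorph_general hisoY hisoZ hdiscZ h hcont hinj hequiv H hH
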